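/- arXiv:2006.03551 — 2 statements merged into one kernel-verified Lean document; each statement's English description precedes it below -/
import Mathlib

section
/- Let P be a Poisson algebra over a field 𝔽. Then P is strongly Lie nilpotent if and only if P is both Lie nilpotent and strongly solvable. -/
/-!
Since `γₙ ⊆ P⁽ⁿ⁾` and `δ̃ₙ ⊆ P⁽ⁿ⁺¹⁾`, strong Lie nilpotence implies the other two properties.
Conversely, let `δ̃_d = 0` and induct on `c`, working modulo a Poisson ideal `J ⊇ γ_{c+1}`.
Then `Z = γ_c` is central modulo `J`, `J + Z·P` is again a Poisson ideal containing `γ_c`, and by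
induction `P⁽ᵐ⁺¹⁾ ⊆ J + Z·P` for some `m`. Brackets pass through factors from `Z` modulo `J`, so
iterating gives `P⁽ᵏᵐ⁺¹⁾ ⊆ Zᵏ·P + J`. Finally `Z ⊆ {P, P}`, and modulo brackets with `u` or `v`
one has `u v {p, q} ≡ {u p, v q}`; hence `Z^(2ʲ - 1)·P ⊆ δ̃ⱼ + J`, which for `j = d` is `J`.
-/

/-- A Poisson bracket on a commutative associative unital `F`-algebra `P`:
an `F`-bilinear, alternating bracket satisfying the Jacobi identity and the
Leibniz rule `{a·b, c} = a·{b,c} + b·{a,c}`. -/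
structure PoissonBracket (F P : Type*) [Field F] [CommRing P] [Algebra F P] where
  bracket : P → P → P
  add_left : ∀ a b c : P, bracket (a + b) c = bracket a c + bracket b c
  smul_left : ∀ (r : F) (a b : P), bracket (r • a) b = r • bracket a b
  add_right : ∀ a b c : P, bracket a (b + c) = bracket a b + bracket a c
  smul_right : ∀ (r : F) (a b : P), bracket a (r • b) = r • bracket a b
  alt : ∀ a : P, bracket a a = 0
  jacobi : ∀ a b c : P,
    bracket (bracket a b) c + bracket (bracket b c) a + bracket (bracket c a) b = 0
  leibniz : ∀ a b c : P, bracket (a * b) c = a * bracket b c + b * bracket a c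

namespace PoissonBracket

variable {F P : Type*} [Field F] [CommRing P] [Algebra F P]

/-- `{A, B}`: the `F`-span of all brackets of elements of `A` with elements of `B`. -/
def lieSpan (pb : PoissonBracket F P) (A B : Submodule F P) : Submodule F P :=
  Submodule.span F {z : P | ∃ a ∈ A, ∃ b ∈ B, z = pb.bracket a b}

/-- Upper derived series: `δ̃₀(P) = P`, `δ̃ₙ₊₁(P) = {δ̃ₙ(P), δ̃ₙ(P)}·P`. -/
def udelta (pb : PoissonBracket F P) : ℕ → Submodule F P
  | 0 => ⊤
  | n + 1 => pb.lieSpan (pb.udelta n) (pb.udelta n) * ⊤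

/-- Derived series of a Lie ideal `I`: `δ₀(I) = I`, `δₙ₊₁(I) = {δₙ(I), δₙ(I)}`. -/
def dseries (pb : PoissonBracket F P) (I : Submodule F P) : ℕ → Submodule F P
  | 0 => I
  | n + 1 => pb.lieSpan (pb.dseries I n) (pb.dseries I n)

/-- Lower central series of a Lie ideal `I`, indexed so that `lcs I 1 = γ₁(I) = I`
and `lcs I (n+1) = γₙ₊₁(I) = {γₙ(I), I}` for `n ≥ 1` (index `0` is a dummy equal to `I`). -/
def lcs (pb : PoissonBracket F P) (I : Submodule F P) : ℕ → Submodule F P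
  | 0 => I
  | 1 => I
  | n + 2 => pb.lieSpan (pb.lcs I (n + 1)) I

/-- Upper Lie power series: `P⁽¹⁾ = P`, `P⁽ⁿ⁾ = {P⁽ⁿ⁻¹⁾, P}·P` for `n > 1`
(index `0` is a dummy equal to `P`). -/
def ulps (pb : PoissonBracket F P) : ℕ → Submodule F P
  | 0 => ⊤
  | 1 => ⊤
  | n + 2 => pb.lieSpan (pb.ulps (n + 1)) ⊤ * ⊤

/-- A Poisson ideal: an ideal for the associative product which is also a Lie ideal. -/
def IsPoissonIdeal (pb : PoissonBracket F P) (I : Submodule F P) : Prop :=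
  (∀ x ∈ I, ∀ p : P, p * x ∈ I) ∧ (∀ x ∈ I, ∀ p : P, pb.bracket x p ∈ I)

/-- The Poisson ideal generated by a set `S`: the smallest Poisson ideal containing `S`. -/
def poissonSpan (pb : PoissonBracket F P) (S : Set P) : Submodule F P :=
  sInf {I : Submodule F P | pb.IsPoissonIdeal I ∧ S ⊆ I}

end PoissonBracket

open PoissonBracket

namespace PoissonBracket

open Submodule

variable {F P : Type*} [Field F] [CommRing P] [Algebra F P] (pb : PoissonBracket F P)

lemma bracket_zero_left (a : P) : pb.bracket 0 a = 0 := by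
  simpa using pb.smul_left 0 0 a

lemma bracket_antisymm (a b : P) : pb.bracket a b = -pb.bracket b a := by
  have h := pb.alt (a + b)
  rw [pb.add_left, pb.add_right, pb.add_right, pb.alt, pb.alt] at h
  linear_combination h

lemma bracket_algebraMap_left (r : F) (a : P) : pb.bracket (algebraMap F P r) a = 0 := by
  have h := pb.leibniz 1 1 a
  simp only [one_mul] at h
  rw [Algebra.algebraMap_eq_smul_one, pb.smul_left, left_eq_add.1 h, smul_zero]

lemma leibniz_right (a b c : P) :
    pb.bracket a (b * c) = b * pb.bracket a c + c * pb.bracket a b := by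
  rw [pb.bracket_antisymm a, pb.leibniz, pb.bracket_antisymm a c, pb.bracket_antisymm a b]
  ring

lemma mul_mul_bracket_eq (u v p q : P) :
    u * v * pb.bracket p q = pb.bracket (u * p) (v * q) + u * q * pb.bracket v p
      - p * v * pb.bracket u q - p * q * pb.bracket u v := by
  rw [pb.leibniz, pb.leibniz_right, pb.leibniz_right, pb.bracket_antisymm v p]
  ring

variable {pb}

lemma bracket_mem_lieSpan {A B : Submodule F P} {a b : P} (ha : a ∈ A) (hb : b ∈ B) :
    pb.bracket a b ∈ pb.lieSpan A B :=
  subset_span ⟨a, ha, b, hb, rfl⟩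

lemma lieSpan_le {A B C : Submodule F P} :
    pb.lieSpan A B ≤ C ↔ ∀ a ∈ A, ∀ b ∈ B, pb.bracket a b ∈ C := by
  refine ⟨fun h a ha b hb ↦ h (bracket_mem_lieSpan ha hb), fun h ↦ span_le.2 ?_⟩
  rintro _ ⟨a, ha, b, hb, rfl⟩
  exact h a ha b hb

lemma lieSpan_mono {A A' B B' : Submodule F P} (hA : A ≤ A') (hB : B ≤ B') :
    pb.lieSpan A B ≤ pb.lieSpan A' B' :=
  lieSpan_le.2 fun _ ha _ hb ↦ bracket_mem_lieSpan (hA ha) (hB hb)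

lemma le_mul_top (A : Submodule F P) : A ≤ A * ⊤ := by
  simpa using mul_le_mul_right (le_top : (1 : Submodule F P) ≤ ⊤) A

lemma mul_mem_mul_top {A : Submodule F P} {y : P} (hy : y ∈ A * ⊤) (p : P) : p * y ∈ A * ⊤ := by
  rw [mul_comm p]
  exact mul_le_mul_right le_top A (mul_assoc A ⊤ ⊤ ▸ mul_mem_mul hy mem_top)

lemma lcs_top_antitone : Antitone (pb.lcs ⊤) := by
  refine antitone_nat_of_succ_le fun n ↦ ?_
  induction n with
  | zero => exact le_top
  | succ n ih =>
    cases n with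
    | zero => exact le_top
    | succ n => exact lieSpan_mono ih le_rfl

lemma lcs_top_le_ulps (n : ℕ) : pb.lcs ⊤ (n + 1) ≤ pb.ulps (n + 1) := by
  induction n with
  | zero => exact le_rfl
  | succ n ih => exact (lieSpan_mono ih le_rfl).trans (le_mul_top _)

lemma udelta_le_ulps (n : ℕ) : pb.udelta n ≤ pb.ulps (n + 1) := by
  induction n with
  | zero => exact le_rfl
  | succ n ih => exact mul_le_mul' (lieSpan_mono ih le_top) le_rfl

section Ideal

variable {J : Submodule F P}

lemma isPoissonIdeal_bot : pb.IsPoissonIdeal ⊥ := by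
  refine ⟨fun x hx p ↦ ?_, fun x hx p ↦ ?_⟩ <;> rw [mem_bot] at hx ⊢
  · rw [hx, mul_zero]
  · rw [hx, bracket_zero_left]

lemma mul_le_of_mul_mem (hJ : ∀ x ∈ J, ∀ p : P, p * x ∈ J) (A : Submodule F P) :
    J * A ≤ J :=
  mul_le.2 fun x hx a _ ↦ mul_comm a x ▸ hJ x hx a

lemma sup_mul_top_le (hJ : ∀ x ∈ J, ∀ p : P, p * x ∈ J) (A : Submodule F P) :
    (A ⊔ J) * ⊤ ≤ A * ⊤ ⊔ J := by
  rw [Submodule.sup_mul]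
  exact sup_le_sup_left (mul_le_of_mul_mem hJ ⊤) _

lemma lieSpan_sup_le (hJ : ∀ x ∈ J, ∀ p : P, pb.bracket x p ∈ J) (A B : Submodule F P) :
    pb.lieSpan (A ⊔ J) (B ⊔ J) ≤ pb.lieSpan A B ⊔ J := by
  refine lieSpan_le.2 fun a' ha' b' hb' ↦ ?_
  obtain ⟨a, ha, i, hi, rfl⟩ := mem_sup.1 ha'
  obtain ⟨b, hb, j, hj, rfl⟩ := mem_sup.1 hb'
  rw [pb.add_left, pb.add_right, pb.bracket_antisymm a j]
  exact add_mem (add_mem (mem_sup_left (bracket_mem_lieSpan ha hb))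
    (mem_sup_right (neg_mem (hJ j hj a)))) (mem_sup_right (hJ i hi _))

end Ideal

section CentralModulo

variable {W J : Submodule F P}

lemma lieSpan_pow_le (hJ : ∀ x ∈ J, ∀ p : P, p * x ∈ J) (hW : pb.lieSpan W ⊤ ≤ J) (k : ℕ) :
    pb.lieSpan (W ^ k) ⊤ ≤ J := by
  induction k with
  | zero =>
    refine lieSpan_le.2 fun u hu p _ ↦ ?_
    obtain ⟨r, rfl⟩ := mem_one.1 (pow_zero W ▸ hu)
    rw [pb.bracket_algebraMap_left]
    exact J.zero_mem
  | succ k ih =>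
    refine lieSpan_le.2 fun u hu p _ ↦ ?_
    rw [pow_succ] at hu
    refine Submodule.mul_induction_on hu (fun w hw z hz ↦ ?_) fun x y hx hy ↦ ?_
    · rw [pb.leibniz]
      exact add_mem (hJ _ (lieSpan_le.1 hW z hz p mem_top) w)
        (hJ _ (lieSpan_le.1 ih w hw p mem_top) z)
    · rw [pb.add_left]
      exact add_mem hx hy

lemma lieSpan_mul_le (hJ : ∀ x ∈ J, ∀ p : P, p * x ∈ J) (hW : pb.lieSpan W ⊤ ≤ J)
    (A : Submodule F P) :
    pb.lieSpan (W * A) ⊤ ≤ W * pb.lieSpan A ⊤ ⊔ J := by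
  refine lieSpan_le.2 fun x hx p _ ↦ ?_
  refine Submodule.mul_induction_on hx (fun w hw a ha ↦ ?_) fun y z hy hz ↦ ?_
  · rw [pb.leibniz]
    exact add_mem (mem_sup_left (mul_mem_mul hw (bracket_mem_lieSpan ha mem_top)))
      (mem_sup_right (hJ _ (lieSpan_le.1 hW w hw p mem_top) a))
  · rw [pb.add_left]
    exact add_mem hy hz

lemma mul_mul_lieSpan_le (hJ : ∀ x ∈ J, ∀ p : P, p * x ∈ J) (hW : pb.lieSpan W ⊤ ≤ J) :
    W * W * pb.lieSpan ⊤ ⊤ ≤ pb.lieSpan (W * ⊤) (W * ⊤) ⊔ J := by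
  have hWJ : ∀ w ∈ W, ∀ p : P, pb.bracket w p ∈ J := fun w hw p ↦ lieSpan_le.1 hW w hw p mem_top
  refine mul_le.2 fun x hx y hy ↦ ?_
  induction hy using span_induction with
  | mem y hy =>
    obtain ⟨p, -, q, -, rfl⟩ := hy
    refine Submodule.mul_induction_on hx (fun u hu v hv ↦ ?_) fun s t hs ht ↦ ?_
    · rw [pb.mul_mul_bracket_eq]
      refine sub_mem (sub_mem (add_mem ?_ ?_) ?_) ?_
      · exact mem_sup_left (bracket_mem_lieSpan (mul_mem_mul hu mem_top) (mul_mem_mul hv mem_top))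
      all_goals exact mem_sup_right (hJ _ (hWJ _ ‹_› _) _)
    · rw [add_mul]
      exact add_mem hs ht
  | zero => simp
  | add y z _ _ hy hz => rw [mul_add]; exact add_mem hy hz
  | smul r y _ hy => rw [mul_smul_comm]; exact smul_mem _ r hy

lemma isPoissonIdeal_sup_mul_top (hJ : pb.IsPoissonIdeal J) (hW : pb.lieSpan W ⊤ ≤ J) :
    pb.IsPoissonIdeal (J ⊔ W * ⊤) := by
  refine ⟨fun x hx p ↦ ?_, fun x hx p ↦ ?_⟩ <;> obtain ⟨j, hj, y, hy, rfl⟩ := mem_sup.1 hx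
  · rw [mul_add]
    exact add_mem (mem_sup_left (hJ.1 j hj p)) (mem_sup_right (mul_mem_mul_top hy p))
  · rw [pb.add_left]
    refine add_mem (mem_sup_left (hJ.2 j hj p)) ?_
    exact sup_le (le_sup_of_le_right (mul_le_mul_right le_top W)) le_sup_left
      (lieSpan_mul_le hJ.1 hW ⊤ (bracket_mem_lieSpan hy mem_top))

lemma ulps_add_le (hJ : pb.IsPoissonIdeal J) (hW : pb.lieSpan W ⊤ ≤ J) {n : ℕ}
    (hn : pb.ulps (n + 1) ≤ W * ⊤ ⊔ J) (j : ℕ) : pb.ulps (n + j + 1) ≤ W * pb.ulps (j + 1) ⊔ J := by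
  induction j with
  | zero => simpa [ulps] using hn
  | succ j ih =>
    calc pb.ulps (n + (j + 1) + 1) = pb.lieSpan (pb.ulps (n + j + 1)) ⊤ * ⊤ := rfl
      _ ≤ (pb.lieSpan (W * pb.ulps (j + 1)) ⊤ ⊔ J) * ⊤ :=
        mul_le_mul_left ((lieSpan_mono ih le_sup_left).trans (lieSpan_sup_le hJ.2 _ _)) ⊤
      _ ≤ (W * pb.lieSpan (pb.ulps (j + 1)) ⊤ ⊔ J) * ⊤ :=
        mul_le_mul_left (sup_le (lieSpan_mul_le hJ.1 hW _) le_sup_right) ⊤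
      _ ≤ W * pb.lieSpan (pb.ulps (j + 1)) ⊤ * ⊤ ⊔ J := sup_mul_top_le hJ.1 _
      _ = W * pb.ulps (j + 1 + 1) ⊔ J := by rw [mul_assoc]; rfl

lemma ulps_mul_add_one_le (hJ : pb.IsPoissonIdeal J) (hW : pb.lieSpan W ⊤ ≤ J) {m : ℕ}
    (hm : pb.ulps (m + 1) ≤ J ⊔ W * ⊤) (k : ℕ) : pb.ulps (k * m + 1) ≤ W ^ k * ⊤ ⊔ J := by
  induction k with
  | zero => simp [ulps]
  | succ k ih =>
    rw [Nat.succ_mul]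
    calc pb.ulps (k * m + m + 1) ≤ W ^ k * pb.ulps (m + 1) ⊔ J :=
          ulps_add_le hJ (lieSpan_pow_le hJ.1 hW k) ih m
      _ ≤ W ^ k * (J ⊔ W * ⊤) ⊔ J := sup_le_sup_right (mul_le_mul_right hm _) J
      _ ≤ W ^ (k + 1) * ⊤ ⊔ J := by
        rw [Submodule.mul_sup, pow_succ, mul_assoc, mul_comm (W ^ k)]
        exact sup_le (sup_le (le_sup_of_le_right (mul_le_of_mul_mem hJ.1 _)) le_sup_left)
          le_sup_right

lemma pow_two_pow_sub_one_mul_top_le (hJ : pb.IsPoissonIdeal J) (hW : pb.lieSpan W ⊤ ≤ J)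
    (hW' : W ≤ pb.lieSpan ⊤ ⊤) (j : ℕ) : W ^ (2 ^ j - 1) * ⊤ ≤ pb.udelta j ⊔ J := by
  induction j with
  | zero => simp [udelta]
  | succ j ih =>
    set a := 2 ^ j - 1
    have ha : 2 ^ (j + 1) - 1 = a + a + 1 := by
      have := Nat.one_le_two_pow (n := j)
      omega
    calc W ^ (2 ^ (j + 1) - 1) * ⊤ = W ^ a * W ^ a * W * ⊤ := by rw [ha, pow_add, pow_add, pow_one]
      _ ≤ W ^ a * W ^ a * pb.lieSpan ⊤ ⊤ * ⊤ := mul_le_mul_left (mul_le_mul_right hW' _) ⊤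
      _ ≤ (pb.lieSpan (W ^ a * ⊤) (W ^ a * ⊤) ⊔ J) * ⊤ :=
        mul_le_mul_left (mul_mul_lieSpan_le hJ.1 (lieSpan_pow_le hJ.1 hW a)) ⊤
      _ ≤ (pb.lieSpan (pb.udelta j) (pb.udelta j) ⊔ J) * ⊤ :=
        mul_le_mul_left (sup_le ((lieSpan_mono ih ih).trans (lieSpan_sup_le hJ.2 _ _))
          le_sup_right) ⊤
      _ ≤ pb.udelta (j + 1) ⊔ J := sup_mul_top_le hJ.1 _

end CentralModulo

lemma exists_ulps_le_of_lcs_le {d : ℕ} (hd : pb.udelta d = ⊥) {c : ℕ} {J : Submodule F P}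
    (hJ : pb.IsPoissonIdeal J) (hc : pb.lcs ⊤ (c + 2) ≤ J) : ∃ m, pb.ulps (m + 1) ≤ J := by
  induction c generalizing J with
  | zero => exact ⟨1, (mul_le_mul_left hc ⊤).trans (mul_le_of_mul_mem hJ.1 ⊤)⟩
  | succ c ih =>
    obtain ⟨m, hm⟩ := ih (isPoissonIdeal_sup_mul_top hJ hc)
      (le_sup_of_le_right (le_mul_top _))
    refine ⟨(2 ^ d - 1) * m, ?_⟩
    have hZ : pb.lcs ⊤ (c + 2) ≤ pb.lcs ⊤ 2 := lcs_top_antitone (by omega)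
    calc pb.ulps ((2 ^ d - 1) * m + 1) ≤ pb.lcs ⊤ (c + 2) ^ (2 ^ d - 1) * ⊤ ⊔ J :=
          ulps_mul_add_one_le hJ hc hm _
      _ ≤ pb.udelta d ⊔ J := sup_le (pow_two_pow_sub_one_mul_top_le hJ hc hZ d) le_sup_right
      _ = J := by rw [hd, bot_sup_eq]

end PoissonBracket

/-- `P` is strongly Lie nilpotent iff `P` is Lie nilpotent and strongly solvable. -/
theorem stronglyLieNilpotent_iff_lieNilpotent_and_stronglySolvable
    {F P : Type*} [Field F] [CommRing P] [Algebra F P]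
    (pb : PoissonBracket F P) :
    (∃ c : ℕ, pb.ulps (c + 1) = ⊥) ↔
      ((∃ c : ℕ, pb.lcs ⊤ c = ⊥) ∧ (∃ n : ℕ, pb.udelta n = ⊥)) := by
  constructor
  · rintro ⟨c, hc⟩
    exact ⟨⟨c + 1, eq_bot_iff.2 (hc ▸ lcs_top_le_ulps c)⟩, c, eq_bot_iff.2 (hc ▸ udelta_le_ulps c)⟩
  · rintro ⟨⟨c, hc⟩, d, hd⟩
    obtain ⟨m, hm⟩ := exists_ulps_le_of_lcs_le hd isPoissonIdeal_bot
      (hc ▸ lcs_top_antitone (Nat.le_add_right c 2))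
    exact ⟨m, eq_bot_iff.2 hm⟩
end

section
/- Let P be a Poisson algebra over a field 𝔽 and let 𝒥 be the Poisson ideal of P generated by all elements {{{x₁,x₂},{x₃,x₄}},x₅} with x₁,…,x₅ ∈ P. Then for all x₁, x₂, x₃, x₄ ∈ P one has 4·{{x₁,x₂},{x₃,x₄}}³ ∈ 𝒥. -/
namespace PoissonBracket

variable {F P : Type*} [Field F] [CommRing P] [Algebra F P]

lemma bracket_swap (pb : PoissonBracket F P) (a b : P) :
    pb.bracket b a = -pb.bracket a b := by
  have h := pb.alt (a + b)
  rw [pb.add_left, pb.add_right, pb.add_right, pb.alt, pb.alt] at h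
  linear_combination h

lemma bracket_mul_right (pb : PoissonBracket F P) (a b c : P) :
    pb.bracket a (b * c) = b * pb.bracket a c + c * pb.bracket a b := by
  rw [bracket_swap pb (b * c), pb.leibniz, bracket_swap pb a c, bracket_swap pb a b]
  ring

lemma bracket_bracket_bracket_sq_mul (pb : PoissonBracket F P) (a b : P) :
    pb.bracket (pb.bracket (pb.bracket (a ^ 2) (a * b)) b) b =
      2 * a ^ 2 * pb.bracket (pb.bracket (pb.bracket a b) b) b
        + 12 * a * pb.bracket a b * pb.bracket (pb.bracket a b) b
        + 4 * pb.bracket a b ^ 3 := by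
  simp only [sq, pb.leibniz, bracket_mul_right pb, pb.add_left, pb.alt, mul_zero, add_zero]
  ring

lemma IsPoissonIdeal.four_mul_bracket_pow_three_mem {pb : PoissonBracket F P}
    {I : Submodule F P} (hI : pb.IsPoissonIdeal I) {a b : P}
    (hsq : pb.bracket (pb.bracket (pb.bracket (a ^ 2) (a * b)) b) b ∈ I)
    (hab : pb.bracket (pb.bracket a b) b ∈ I) :
    4 * pb.bracket a b ^ 3 ∈ I := by
  rw [eq_sub_of_add_eq' (bracket_bracket_bracket_sq_mul pb a b).symm]
  exact I.sub_mem hsq (I.add_mem (hI.1 _ (hI.2 _ hab b) _) (hI.1 _ hab _))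

lemma isPoissonIdeal_poissonSpan (pb : PoissonBracket F P) (S : Set P) :
    pb.IsPoissonIdeal (pb.poissonSpan S) :=
  ⟨fun x hx p => Submodule.mem_sInf.2 fun I hI => hI.1.1 x (Submodule.mem_sInf.1 hx I hI) p,
    fun x hx p => Submodule.mem_sInf.2 fun I hI => hI.1.2 x (Submodule.mem_sInf.1 hx I hI) p⟩

lemma subset_poissonSpan (pb : PoissonBracket F P) (S : Set P) :
    S ⊆ pb.poissonSpan S :=
  fun _ hz => Submodule.mem_sInf.2 fun _ hI => hI.2 hz

end PoissonBracket

open PoissonBracket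

/-- `4·{{x₁,x₂},{x₃,x₄}}³` lies in the Poisson ideal generated by all elements
`{{{y₁,y₂},{y₃,y₄}},y₅}`. -/
theorem four_smul_bracket_cube_mem_poissonSpan
    {F P : Type*} [Field F] [CommRing P] [Algebra F P]
    (pb : PoissonBracket F P) (x1 x2 x3 x4 : P) :
    4 • (pb.bracket (pb.bracket x1 x2) (pb.bracket x3 x4)) ^ 3 ∈
      pb.poissonSpan {z : P | ∃ y1 y2 y3 y4 y5 : P,
        z = pb.bracket (pb.bracket (pb.bracket y1 y2) (pb.bracket y3 y4)) y5} := by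
  set a := pb.bracket x1 x2
  set b := pb.bracket x3 x4
  rw [nsmul_eq_mul, Nat.cast_ofNat]
  exact (isPoissonIdeal_poissonSpan pb _).four_mul_bracket_pow_three_mem
    (subset_poissonSpan pb _ ⟨a ^ 2, a * b, x3, x4, b, rfl⟩)
    (subset_poissonSpan pb _ ⟨x1, x2, x3, x4, b, rfl⟩)
end
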